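/- arXiv:2510.19704 — 5 statements merged into one kernel-verified Lean document; each statement's English description precedes it below -/
import Mathlib

section
/- Let y_0,...,y_m, z_0,...,z_m be real numbers satisfying 400*( Σ_{k=1}^m (y_k - y_{k-1} z_{k-1})^2 + Σ_{k=0}^m (y_k - z_k)^2 ) < y_m^2. If 0 < y_0 < 1/2 and |z_m| < 1, then y_m^2 ≤ y_0^((2^(m+2)+2)/3). -/
/-!
Put `ε = |y m| / 20`. Every summand on the left is below `ε²`, so `|y (k+1) - y k z k| < ε`
and `|y k - z k| < ε`, whence `|y (k+1)| ≤ |y k|² + |y k| ε + ε`, and `|z m| < 1` forces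
`19 ε < 1`.
In this perturbed squaring the `|y k|` stay below `1/2`, and once one of them drops to `18 ε` all
later ones stay there; since `|y m| = 20 ε`, all of them exceed `18 ε`, which absorbs the
perturbation: `|y (k+1)| ≤ (12/11) |y k|²`. With `b = y 0 ^ (1/3)` and `(12/11) b ≤ 1` this
squaring gives `|y k| ≤ b ^ (2 ^ (k+1) + 1)`.
-/

lemma abs_lt_of_sum_sq_lt {ι : Type*} {s : Finset ι} {f : ι → ℝ} {ε : ℝ} (hε : 0 ≤ ε)
    (h : ∑ i ∈ s, f i ^ 2 < ε ^ 2) {i : ι} (hi : i ∈ s) : |f i| < ε :=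
  abs_lt_of_sq_lt_sq ((Finset.single_le_sum (fun j _ => sq_nonneg (f j)) hi).trans_lt h)
    hε

lemma abs_le_sq_add_of_abs_sub_mul_le {y y' z ε : ℝ} (h' : |y' - y * z| ≤ ε)
    (h : |y - z| ≤ ε) : |y'| ≤ |y| ^ 2 + |y| * ε + ε := by
  have hyz : |y * (z - y)| ≤ |y| * ε := by
    rw [abs_mul, abs_sub_comm]
    exact mul_le_mul_of_nonneg_left h (abs_nonneg y)
  calc |y'| = |(y' - y * z) + y * (z - y) + y ^ 2| := by ring_nf
    _ ≤ |y' - y * z| + |y * (z - y)| + |y ^ 2| := abs_add_three _ _ _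
    _ ≤ |y| ^ 2 + |y| * ε + ε := by rw [abs_pow]; linarith

lemma abs_succ_le_of_sum_sq_lt {m : ℕ} {y z : ℕ → ℝ} {ε : ℝ} (hε : 0 ≤ ε)
    (h₁ : ∑ k ∈ Finset.Icc 1 m, (y k - y (k - 1) * z (k - 1)) ^ 2 < ε ^ 2)
    (h₂ : ∑ k ∈ Finset.range (m + 1), (y k - z k) ^ 2 < ε ^ 2) :
    ∀ k < m, |y (k + 1)| ≤ |y k| ^ 2 + |y k| * ε + ε := fun k hk =>
  abs_le_sq_add_of_abs_sub_mul_le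
    (abs_lt_of_sum_sq_lt hε (f := fun k => y k - y (k - 1) * z (k - 1)) h₁
      (Finset.mem_Icc.2 ⟨by omega, hk⟩)).le
    (abs_lt_of_sum_sq_lt hε (f := fun k => y k - z k) h₂
      (Finset.mem_range.2 (by omega))).le

lemma le_pow_of_le_mul_sq {a : ℕ → ℝ} {m : ℕ} {b C : ℝ} (ha : ∀ k, 0 ≤ a k)
    (hb : 0 ≤ b) (hC : 0 ≤ C) (hCb : C * b ≤ 1) (h0 : a 0 ≤ b ^ 3)
    (hrec : ∀ k < m, a (k + 1) ≤ C * a k ^ 2) :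
    ∀ k ≤ m, a k ≤ b ^ (2 ^ (k + 1) + 1) := by
  intro k hk
  induction k with
  | zero => simpa using h0
  | succ n ih =>
    have hsq : a n ^ 2 ≤ b * b ^ (2 ^ (n + 2) + 1) := by
      calc a n ^ 2 ≤ (b ^ (2 ^ (n + 1) + 1)) ^ 2 :=
            pow_le_pow_left₀ (ha n) (ih (by omega)) 2
        _ = b * b ^ (2 ^ (n + 2) + 1) := by ring
    calc a (n + 1) ≤ C * a n ^ 2 := hrec n hk
      _ ≤ C * b * b ^ (2 ^ (n + 2) + 1) := by
        rw [mul_assoc]; exact mul_le_mul_of_nonneg_left hsq hC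
      _ ≤ b ^ (2 ^ (n + 1 + 1) + 1) := mul_le_of_le_one_left (by positivity) hCb

namespace PerturbedSquaring

variable {a : ℕ → ℝ} {ε : ℝ} {m : ℕ} (ha : ∀ k, 0 ≤ a k)
  (hrec : ∀ k < m, a (k + 1) ≤ a k ^ 2 + a k * ε + ε)
include ha hrec

lemma lt_half (hε : ε < 1 / 6) (h0 : a 0 < 1 / 2) : ∀ k ≤ m, a k < 1 / 2 := by
  intro k hk
  induction k with
  | zero => exact h0
  | succ n ih =>
    have := ih (by omega)
    nlinarith [hrec n hk, ha n]

lemma lt_of_lt_last (hε : ε < 1 / 6) (h0 : a 0 < 1 / 2) (hm : 18 * ε < a m) :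
    ∀ k ≤ m, 18 * ε < a k := by
  refine fun k hk => Nat.decreasingInduction (motive := fun k _ => 18 * ε < a k)
    (fun k hk ih => ?_) hm hk
  -- from `a k ≤ 18 ε` and `a k < 1/2` the recurrence would give `a (k+1) ≤ 10 ε`
  by_contra! hle
  have := lt_half ha hrec hε h0 k hk.le
  nlinarith [hrec k hk, ha k]

lemma le_mul_sq (hε : ε < 1 / 6) (h0 : a 0 < 1 / 2) (hm : 18 * ε < a m) :
    ∀ k < m, a (k + 1) ≤ 12 / 11 * a k ^ 2 := by
  intro k hk
  have := lt_half ha hrec hε h0 k hk.le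
  have := lt_of_lt_last ha hrec hε h0 hm (k + 1) hk
  nlinarith [hrec k hk, ha k]

end PerturbedSquaring

lemma rpow_div_three_eq_pow (x : ℝ) (hx : 0 ≤ x) (n : ℕ) :
    x ^ ((n : ℝ) / 3) = (x ^ (1 / 3 : ℝ)) ^ n := by
  rw [← Real.rpow_natCast, ← Real.rpow_mul hx]
  ring_nf

theorem stmt_0 (m : ℕ) (y z : ℕ → ℝ)
    (hineq : 400 * ((∑ k ∈ Finset.Icc 1 m, (y k - y (k - 1) * z (k - 1)) ^ 2) +
        ∑ k ∈ Finset.range (m + 1), (y k - z k) ^ 2) < (y m) ^ 2)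
    (hy0 : 0 < y 0) (hy0' : y 0 < 1 / 2) (hzm : |z m| < 1) :
    (y m) ^ 2 ≤ (y 0) ^ (((2 : ℝ) ^ (m + 2) + 2) / 3) := by
  have hym : y m ≠ 0 := (pow_ne_zero_iff two_ne_zero).1 (hineq.trans_le' (by positivity)).ne'
  set ε := |y m| / 20 with hεdef
  have hε : 0 < ε := by positivity
  have hε400 : (y m) ^ 2 = 400 * ε ^ 2 := by rw [div_pow, sq_abs]; ring
  have h₁ : ∑ k ∈ Finset.Icc 1 m, (y k - y (k - 1) * z (k - 1)) ^ 2 < ε ^ 2 := by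
    linarith [show 0 ≤ ∑ k ∈ Finset.range (m + 1), (y k - z k) ^ 2 by positivity]
  have h₂ : ∑ k ∈ Finset.range (m + 1), (y k - z k) ^ 2 < ε ^ 2 := by
    linarith [show 0 ≤ ∑ k ∈ Finset.Icc 1 m, (y k - y (k - 1) * z (k - 1)) ^ 2 by positivity]
  have hε6 : ε < 1 / 6 := by
    have hyz : |y m - z m| < ε :=
      abs_lt_of_sum_sq_lt hε.le (f := fun k => y k - z k) h₂ (Finset.self_mem_range_succ m)
    linarith [abs_sub_abs_le_abs_sub (y m) (z m)]
  have hsquaring := PerturbedSquaring.le_mul_sq (fun k => abs_nonneg (y k))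
    (abs_succ_le_of_sum_sq_lt hε.le h₁ h₂) hε6 (by rwa [abs_of_pos hy0]) (by linarith)
  set b := y 0 ^ (1 / 3 : ℝ)
  have hb3 : b ^ 3 = y 0 := by rw [← rpow_div_three_eq_pow (y 0) hy0.le 3]; norm_num
  have hbC : 12 / 11 * b ≤ 1 := by
    have : b < 11 / 12 := lt_of_pow_lt_pow_left₀ 3 (by norm_num) (by rw [hb3]; linarith)
    linarith
  have hdecay := le_pow_of_le_mul_sq (fun k => abs_nonneg (y k)) (by positivity) (by norm_num)
    hbC (by rw [hb3, abs_of_pos hy0]) hsquaring m le_rfl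
  calc (y m) ^ 2 = |y m| ^ 2 := (sq_abs _).symm
    _ ≤ (b ^ (2 ^ (m + 1) + 1)) ^ 2 := pow_le_pow_left₀ (abs_nonneg _) hdecay 2
    _ = b ^ (2 ^ (m + 2) + 2) := by ring
    _ = (y 0) ^ (((2 : ℝ) ^ (m + 2) + 2) / 3) := by
      rw [← rpow_div_three_eq_pow (y 0) hy0.le]
      push_cast
      rfl
end

section
/- Let y_0,...,y_m, z_0,...,z_m be real numbers satisfying 400*( Σ_{k=1}^m (y_k - y_{k-1} z_{k-1})^2 + Σ_{k=0}^m (y_k - z_k)^2 ) < y_m^2 and |z_m| < 1. Then |y_m| < 20/19. -/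
/-! Only the summand `(y m - z m) ^ 2` matters: it gives `20 |y m - z m| < |y m|`, hence
`|y m| < |y m| / 20 + |z m| < |y m| / 20 + 1`. -/

theorem abs_lt_of_sq_mul_sub_lt {a b c r : ℝ} (hc : 1 < c) (h : c ^ 2 * (a - b) ^ 2 < a ^ 2)
    (hb : |b| < r) : |a| < c * r / (c - 1) := by
  have hclose : c * |a - b| < |a| := by
    have : |c * (a - b)| < |a| := sq_lt_sq.mp (by rwa [mul_pow])
    rwa [abs_mul, abs_of_pos (by linarith)] at this
  have htri : |a| - |b| ≤ |a - b| := abs_sub_abs_le_abs_sub a b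
  rw [lt_div_iff₀ (by linarith)]
  nlinarith

theorem stmt_2 (m : ℕ) (y z : ℕ → ℝ)
    (hineq : 400 * ((∑ k ∈ Finset.Icc 1 m, (y k - y (k - 1) * z (k - 1)) ^ 2) +
        ∑ k ∈ Finset.range (m + 1), (y k - z k) ^ 2) < (y m) ^ 2)
    (hzm : |z m| < 1) :
    |y m| < 20 / 19 := by
  have hdrift : 0 ≤ ∑ k ∈ Finset.Icc 1 m, (y k - y (k - 1) * z (k - 1)) ^ 2 :=
    Finset.sum_nonneg fun _ _ => sq_nonneg _
  have hlast : (y m - z m) ^ 2 ≤ ∑ k ∈ Finset.range (m + 1), (y k - z k) ^ 2 :=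
    Finset.single_le_sum (f := fun k => (y k - z k) ^ 2) (fun _ _ => sq_nonneg _)
      (Finset.self_mem_range_succ m)
  have hclose : (20 : ℝ) ^ 2 * (y m - z m) ^ 2 < y m ^ 2 := by linarith
  convert abs_lt_of_sq_mul_sub_lt (by norm_num) hclose hzm using 1
  norm_num
end

section
/- Let y_0,...,y_m, z_0,...,z_m be real numbers satisfying 400*( Σ_{k=1}^m (y_k - y_{k-1} z_{k-1})^2 + Σ_{k=0}^m (y_k - z_k)^2 ) < y_m^2 and |z_m| < 1. Then for every k with 0 ≤ k ≤ m, |y_k| ≥ |y_m|/2. -/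
/-!
Every defect term is smaller than `|y m| / 20`; together with `|z m| < 1` this forces
`|y m| < 20 / 19`. If some `|y k|` were below `|y m| / 2`, then `|z k|` would be below
`11 |y m| / 20 < 1`, so the recursion `y (k + 1) ≈ y k * z k` keeps `|y (k + 1)|` below
`|y m| / 2` as well, and inductively `|y m| < |y m| / 2`, which is absurd.
-/

lemma abs_lt_abs_div_of_mul_sq_lt {a b c : ℝ} (hc : 0 < c) (h : c ^ 2 * a ^ 2 < b ^ 2) :
    |a| < |b| / c := by
  rw [lt_div_iff₀ hc, ← abs_of_pos hc, ← abs_mul]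
  exact sq_lt_sq.mp (by rw [mul_pow]; linarith)

lemma abs_lt_of_abs_sub_mul_lt {a b z r ε : ℝ} (ha : |a| < r) (hz : |a - z| < ε)
    (hb : |b - a * z| < ε) : |b| < ε + r * (r + ε) := by
  have hz' : |z| < r + ε := by
    calc |z| = |a - (a - z)| := by ring_nf
      _ ≤ |a| + |a - z| := abs_sub _ _
      _ < r + ε := by linarith
  have hmul : |a| * |z| < r * (r + ε) := mul_lt_mul'' ha hz' (abs_nonneg _) (abs_nonneg _)
  calc |b| = |(b - a * z) + a * z| := by ring_nf
    _ ≤ |b - a * z| + |a| * |z| := by rw [← abs_mul]; exact abs_add_le _ _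
    _ < ε + r * (r + ε) := by linarith

lemma abs_lt_half_of_le_of_abs_lt_half {m k : ℕ} {y z : ℕ → ℝ} {M : ℝ} (hM : M < 20 / 19)
    (hdiff : ∀ i ≤ m, |y i - z i| < M / 20) (hrec : ∀ j < m, |y (j + 1) - y j * z j| < M / 20)
    (hk : |y k| < M / 2) : ∀ j, k ≤ j → j ≤ m → |y j| < M / 2 := by
  have hM0 : 0 < M := by linarith [abs_nonneg (y k)]
  intro j hkj
  induction j, hkj using Nat.le_induction with
  | base => exact fun _ => hk
  | succ j _ ih =>
    intro hj
    have := abs_lt_of_abs_sub_mul_lt (ih (by omega)) (hdiff j (by omega)) (hrec j hj)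
    nlinarith [mul_pos hM0 (by linarith : (0 : ℝ) < 20 / 19 - M)]

theorem stmt_3 (m : ℕ) (y z : ℕ → ℝ)
    (hineq : 400 * ((∑ k ∈ Finset.Icc 1 m, (y k - y (k - 1) * z (k - 1)) ^ 2) +
        ∑ k ∈ Finset.range (m + 1), (y k - z k) ^ 2) < (y m) ^ 2)
    (hzm : |z m| < 1) :
    ∀ k, k ≤ m → |y k| ≥ |y m| / 2 := by
  have hrecSum := Finset.sum_nonneg fun k (_ : k ∈ Finset.Icc 1 m) =>
    sq_nonneg (y k - y (k - 1) * z (k - 1))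
  have hdiffSum := Finset.sum_nonneg fun k (_ : k ∈ Finset.range (m + 1)) => sq_nonneg (y k - z k)
  have hdiff : ∀ i ≤ m, |y i - z i| < |y m| / 20 := fun i hi => by
    have := Finset.single_le_sum (fun k _ => sq_nonneg (y k - z k))
      (Finset.mem_range_succ_iff.mpr hi)
    exact abs_lt_abs_div_of_mul_sq_lt (by norm_num) (by linarith)
  have hrec : ∀ j < m, |y (j + 1) - y j * z j| < |y m| / 20 := fun j hj => by
    have := Finset.single_le_sum (fun k _ => sq_nonneg (y k - y (k - 1) * z (k - 1)))
      (Finset.mem_Icc.mpr ⟨Nat.le_add_left 1 j, hj⟩)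
    simp only [Nat.add_sub_cancel] at this
    exact abs_lt_abs_div_of_mul_sq_lt (by norm_num) (by linarith)
  have hM : |y m| < 20 / 19 := by
    linarith [hdiff m le_rfl, abs_sub_abs_le_abs_sub (y m) (z m)]
  intro k hk
  by_contra! hyk
  have := abs_lt_half_of_le_of_abs_lt_half hM hdiff hrec hyk m hk le_rfl
  linarith [abs_nonneg (y m)]
end

section
/- Let Q : ℝ^n → ℝ be a homogeneous polynomial of degree 4 whose coefficients are bounded in absolute value by C > 0, let β = 2 n^2 C, and let p(x_0, x) = x_0^4 - β x_0^2 ‖x‖^2 + Q(x). If 0 < ε < min(1/√(2β), 1/(2n)), then p(‖x‖, ε·x) > 0 for all x ∈ ℝ^n \ {0}. -/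
/-!
Write `r = ‖x‖`. Every coordinate of `ε • x` is at most `ε r` in absolute value, and `Q` has at
most `n ^ 4` monomials, so `|Q(ε x)| ≤ n ^ 4 C ε ^ 4 r ^ 4`. Hence
`p(r, ε x) ≥ r ^ 4 (1 - β ε ^ 2 - n ^ 4 C ε ^ 4)`, and the two bounds on `ε` give `β ε ^ 2 < 1/2`
and `n ^ 4 C ε ^ 4 = (β ε ^ 2 / 2) (n ε) ^ 2 < 1/16`.
-/

open MvPolynomial

theorem Sym.ofVector_surjective {α : Type*} {k : ℕ} :
    Function.Surjective (Sym.ofVector : List.Vector α k → Sym α k) := by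
  rintro ⟨m, hm⟩
  induction m using Quotient.inductionOn with
  | h l => exact ⟨⟨l, hm⟩, rfl⟩

theorem Sym.card_le_pow (α : Type*) [Fintype α] [DecidableEq α] (k : ℕ) :
    Fintype.card (Sym α k) ≤ Fintype.card α ^ k :=
  card_vector (α := α) k ▸ Fintype.card_le_of_surjective _ Sym.ofVector_surjective

namespace MvPolynomial.IsHomogeneous

variable {σ : Type*} [Fintype σ] {k : ℕ}

theorem card_support_le {R : Type*} [CommSemiring R] {φ : MvPolynomial σ R}
    (hφ : φ.IsHomogeneous k) : φ.support.card ≤ Fintype.card σ ^ k := by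
  classical
  calc φ.support.card ≤ (Finset.univ.finsuppAntidiag k).card := by
        refine Finset.card_le_card fun d hd => ?_
        rw [Finset.mem_finsuppAntidiag]
        refine ⟨?_, Finset.subset_univ _⟩
        simpa [Finsupp.weight_apply, Finsupp.sum_fintype] using hφ (mem_support_iff.mp hd)
    _ = Fintype.card (Sym σ k) := by
        rw [Finset.card_finsuppAntidiag_nat_eq_multichoose, Sym.card_sym_eq_multichoose,
          Finset.card_univ]
    _ ≤ Fintype.card σ ^ k := Sym.card_le_pow σ k

theorem abs_eval_le {φ : MvPolynomial σ ℝ} (hφ : φ.IsHomogeneous k) {C : ℝ}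
    (hcoeff : ∀ d, |φ.coeff d| ≤ C) {y : σ → ℝ} {M : ℝ} (hM : 0 ≤ M) (hy : ∀ i, |y i| ≤ M) :
    |eval y φ| ≤ Fintype.card σ ^ k * C * M ^ k := by
  have hC : 0 ≤ C := (abs_nonneg _).trans (hcoeff 0)
  have hmonomial : ∀ d ∈ φ.support, |φ.coeff d * ∏ i, y i ^ d i| ≤ C * M ^ k := by
    intro d hd
    have hdeg : ∑ i, d i = k := by
      simpa [Finsupp.weight_apply, Finsupp.sum_fintype] using hφ (mem_support_iff.mp hd)
    have hprod : ∏ i, |y i| ^ d i ≤ M ^ k := by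
      rw [← hdeg, ← Finset.prod_pow_eq_pow_sum]
      exact Finset.prod_le_prod (fun i _ => by positivity)
        fun i _ => pow_le_pow_left₀ (abs_nonneg _) (hy i) _
    rw [abs_mul, Finset.abs_prod]
    simp only [abs_pow]
    exact mul_le_mul (hcoeff d) hprod (by positivity) hC
  calc |eval y φ| ≤ ∑ d ∈ φ.support, |φ.coeff d * ∏ i, y i ^ d i| := by
        rw [eval_eq']
        exact Finset.abs_sum_le_sum_abs _ _
    _ ≤ φ.support.card * (C * M ^ k) := by
        simpa using Finset.sum_le_sum hmonomial
    _ ≤ (Fintype.card σ ^ k : ℕ) * (C * M ^ k) := by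
        gcongr
        exact hφ.card_support_le
    _ = Fintype.card σ ^ k * C * M ^ k := by push_cast; ring

end MvPolynomial.IsHomogeneous

theorem mul_sq_lt_half_of_lt_one_div_sqrt {β ε : ℝ} (hβ : 0 ≤ β) (hε : 0 ≤ ε)
    (h : ε < 1 / √(2 * β)) : β * ε ^ 2 < 1 / 2 := by
  rcases hβ.eq_or_lt with rfl | hβ
  · norm_num
  have hsqrt : 0 < √(2 * β) := Real.sqrt_pos.mpr (by positivity)
  have h' : (ε * √(2 * β)) ^ 2 < 1 :=
    pow_lt_one₀ (by positivity) (by rwa [lt_div_iff₀ hsqrt] at h) two_ne_zero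
  rw [mul_pow, Real.sq_sqrt (by positivity)] at h'
  linarith

theorem mul_lt_half_of_lt_one_div_two_mul {a ε : ℝ} (ha : 0 ≤ a) (h : ε < 1 / (2 * a)) :
    a * ε < 1 / 2 := by
  rcases ha.eq_or_lt with rfl | ha
  · norm_num
  rw [lt_div_iff₀ (by positivity)] at h
  linarith

theorem stmt_9_general (n : ℕ) (C : ℝ) (Q : MvPolynomial (Fin n) ℝ)
    (hhom : Q.IsHomogeneous 4) (hcoeff : ∀ d, |Q.coeff d| ≤ C)
    (β : ℝ) (hβ : β = 2 * n ^ 2 * C)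
    (p : ℝ → EuclideanSpace ℝ (Fin n) → ℝ)
    (hp : ∀ x0 x, p x0 x = x0 ^ 4 - β * x0 ^ 2 * ‖x‖ ^ 2 + MvPolynomial.eval (fun i => x i) Q)
    (ε : ℝ) (hε : 0 < ε) (hε' : ε < min (1 / Real.sqrt (2 * β)) (1 / (2 * n))) :
    ∀ x : EuclideanSpace ℝ (Fin n), x ≠ 0 → 0 < p ‖x‖ (ε • x) := by
  intro x hx
  have hC : 0 ≤ C := (abs_nonneg _).trans (hcoeff 0)
  have hβε : β * ε ^ 2 < 1 / 2 :=
    mul_sq_lt_half_of_lt_one_div_sqrt (by rw [hβ]; positivity) hε.le (lt_min_iff.mp hε').1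
  have hnε : (n : ℝ) * ε < 1 / 2 :=
    mul_lt_half_of_lt_one_div_two_mul n.cast_nonneg (lt_min_iff.mp hε').2
  have hsmall : β * ε ^ 2 + n ^ 4 * C * ε ^ 4 < 1 := by
    have hsplit : (n : ℝ) ^ 4 * C * ε ^ 4 = β * ε ^ 2 / 2 * (n * ε) ^ 2 := by rw [hβ]; ring
    have : ((n : ℝ) * ε) ^ 2 < 1 / 4 := by nlinarith [mul_nonneg n.cast_nonneg hε.le]
    nlinarith [show 0 ≤ β * ε ^ 2 by rw [hβ]; positivity]
  have hnorm : ‖ε • x‖ = ε * ‖x‖ := by rw [norm_smul, Real.norm_of_nonneg hε.le]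
  have hQ : |eval (fun i => (ε • x) i) Q| ≤ n ^ 4 * C * (ε * ‖x‖) ^ 4 := by
    simpa using hhom.abs_eval_le hcoeff (by positivity)
      fun i => hnorm ▸ PiLp.norm_apply_le (ε • x) i
  have hx4 : 0 < ‖x‖ ^ 4 := by positivity
  rw [hp, hnorm]
  nlinarith [mul_pos hx4 (sub_pos.mpr hsmall), (abs_le.mp hQ).1]

theorem stmt_9 (n : ℕ) (C : ℝ) (hC : 0 < C) (Q : MvPolynomial (Fin n) ℝ)
    (hhom : Q.IsHomogeneous 4) (hcoeff : ∀ d, |Q.coeff d| ≤ C)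
    (β : ℝ) (hβ : β = 2 * n ^ 2 * C)
    (p : ℝ → EuclideanSpace ℝ (Fin n) → ℝ)
    (hp : ∀ x0 x, p x0 x = x0 ^ 4 - β * x0 ^ 2 * ‖x‖ ^ 2 + MvPolynomial.eval (fun i => x i) Q)
    (ε : ℝ) (hε : 0 < ε) (hε' : ε < min (1 / Real.sqrt (2 * β)) (1 / (2 * n))) :
    ∀ x : EuclideanSpace ℝ (Fin n), x ≠ 0 → 0 < p ‖x‖ (ε • x) :=
  stmt_9_general n C Q hhom hcoeff β hβ p hp ε hε hε'
end

section
/- A real symmetric 4×4 block matrix B with entries B = [[2β‖x‖²Q, 0, -4Q, 0],[0, 2β²‖x‖⁴-4Q, 0, -2β‖x‖²],[-4Q, 0, 2β‖x‖², 0],[0, -2β‖x‖², 0, 4]] (with β > 0, ‖x‖ > 0, Q ∈ ℝ) is positive semidefinite if and only if Q ≥ 0 and (β²/4)‖x‖⁴ - Q ≥ 0. -/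
/-!
With `a = β‖x‖²` the matrix couples only the coordinates `{0, 2}` and `{1, 3}`, and its quadratic
form is the sum of two binary forms with the sum-of-squares decompositions
  `a · (2aQ x² - 8Q xy + 2a y²) = 2 (a y - 2Q x)² + 2Q (a² - 4Q) x²`,
  `(2a² - 4Q) x² - 4a xy + 4 y² = (a x - 2y)² + (a² - 4Q) x²`.
Hence `Q ≥ 0` and `a² ≥ 4Q` suffice. Conversely the diagonal entry `2aQ` forces `Q ≥ 0`, and the
vector `(0, 2, 0, a)`, which kills the square `(a x - 2y)²`, has form value `4 (a² - 4Q)`.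
-/

open Matrix

namespace InterleavedBlock

variable (a Q : ℝ)

def matrix : Matrix (Fin 4) (Fin 4) ℝ :=
  !![2 * a * Q, 0, -4 * Q, 0;
     0, 2 * a ^ 2 - 4 * Q, 0, -2 * a;
     -4 * Q, 0, 2 * a, 0;
     0, -2 * a, 0, 4]

theorem isHermitian_matrix : (matrix a Q).IsHermitian := by
  ext i j
  fin_cases i <;> fin_cases j <;> simp [matrix]

theorem dotProduct_matrix_mulVec (v : Fin 4 → ℝ) :
    v ⬝ᵥ matrix a Q *ᵥ v =
      (2 * a * Q * v 0 ^ 2 - 8 * Q * v 0 * v 2 + 2 * a * v 2 ^ 2) +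
      ((2 * a ^ 2 - 4 * Q) * v 1 ^ 2 - 4 * a * v 1 * v 3 + 4 * v 3 ^ 2) := by
  simp only [dotProduct, mulVec, matrix, of_apply, cons_val', cons_val_fin_one, Fin.sum_univ_four,
    cons_val_zero, cons_val_one, cons_val]
  ring

theorem firstBlock_nonneg {a Q : ℝ} (ha : 0 < a) (hQ : 0 ≤ Q) (hQa : 4 * Q ≤ a ^ 2) (x y : ℝ) :
    0 ≤ 2 * a * Q * x ^ 2 - 8 * Q * x * y + 2 * a * y ^ 2 := by
  refine nonneg_of_mul_nonneg_right ?_ ha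
  have hsos : a * (2 * a * Q * x ^ 2 - 8 * Q * x * y + 2 * a * y ^ 2) =
      2 * (a * y - 2 * Q * x) ^ 2 + 2 * Q * (a ^ 2 - 4 * Q) * x ^ 2 := by ring
  rw [hsos]
  have : 0 ≤ a ^ 2 - 4 * Q := by linarith
  positivity

theorem secondBlock_nonneg {a Q : ℝ} (hQa : 4 * Q ≤ a ^ 2) (x y : ℝ) :
    0 ≤ (2 * a ^ 2 - 4 * Q) * x ^ 2 - 4 * a * x * y + 4 * y ^ 2 := by
  have hsos : (2 * a ^ 2 - 4 * Q) * x ^ 2 - 4 * a * x * y + 4 * y ^ 2 =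
      (a * x - 2 * y) ^ 2 + (a ^ 2 - 4 * Q) * x ^ 2 := by ring
  rw [hsos]
  have : 0 ≤ a ^ 2 - 4 * Q := by linarith
  positivity

theorem posSemidef_matrix_iff {a Q : ℝ} (ha : 0 < a) :
    (matrix a Q).PosSemidef ↔ 0 ≤ Q ∧ 4 * Q ≤ a ^ 2 := by
  constructor
  · intro h
    have hdiag : 0 ≤ 2 * a * Q := h.diag_nonneg (i := 0)
    have htest := h.dotProduct_mulVec_nonneg ![0, 2, 0, a]
    rw [star_trivial, dotProduct_matrix_mulVec] at htest
    simp only [cons_val, cons_val_zero, cons_val_one] at htest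
    exact ⟨nonneg_of_mul_nonneg_right (by linarith) ha, by linarith⟩
  · rintro ⟨hQ, hQa⟩
    refine .of_dotProduct_mulVec_nonneg (isHermitian_matrix a Q) fun v => ?_
    rw [star_trivial, dotProduct_matrix_mulVec]
    exact add_nonneg (firstBlock_nonneg ha hQ hQa _ _) (secondBlock_nonneg hQa _ _)

end InterleavedBlock

theorem stmt_10 (β s Q : ℝ) (hβ : 0 < β) (hs : 0 < s) :
    (Matrix.PosSemidef
      !![2 * β * s ^ 2 * Q, 0, -4 * Q, 0;
         0, 2 * β ^ 2 * s ^ 4 - 4 * Q, 0, -2 * β * s ^ 2;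
         -4 * Q, 0, 2 * β * s ^ 2, 0;
         0, -2 * β * s ^ 2, 0, 4]) ↔
    (0 ≤ Q ∧ 0 ≤ β ^ 2 / 4 * s ^ 4 - Q) := by
  have hmatrix : !![2 * β * s ^ 2 * Q, 0, -4 * Q, 0;
      0, 2 * β ^ 2 * s ^ 4 - 4 * Q, 0, -2 * β * s ^ 2;
      -4 * Q, 0, 2 * β * s ^ 2, 0;
      0, -2 * β * s ^ 2, 0, 4] = InterleavedBlock.matrix (β * s ^ 2) Q := by
    unfold InterleavedBlock.matrix
    ring_nf
  rw [hmatrix, InterleavedBlock.posSemidef_matrix_iff (by positivity)]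
  constructor <;> rintro ⟨hQ, hQa⟩ <;> exact ⟨hQ, by linarith⟩
end
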